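/- arXiv:1602.00992 — 4 statements merged into one kernel-verified Lean document; each statement's English description precedes it below -/
import Mathlib

section
/- Every finite-dimensional complex representation of the Lie algebra W_> is trivial, i.e., if ρ : W_> → End(E) is a Lie algebra homomorphism with E a finite-dimensional complex vector space, then ρ(L_k) = 0 for all k ≥ -1. -/
/-!
`ad (L 0)` has `L k` as eigenvector of eigenvalue `-k`, so in a finite-dimensional image only
finitely many `ρ (L k)` are nonzero. If `m` were the largest such index, then
`[ρ (L (-1)), ρ (L (m + 1))] = -(m + 2) • ρ (L m)` would force `ρ (L m) = 0`.
-/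

/-- `L : ℤ → W` (restricted to indices `k ≥ -1`) is a basis of the complex Lie algebra `W`
realizing it as `W_>`, the Lie algebra with basis `{L_k}_{k ≥ -1}` and bracket
`[L_i, L_j] = (i - j) L_{i+j}`. -/
def IsWittBasis {W : Type*} [LieRing W] [LieAlgebra ℂ W] (L : ℤ → W) : Prop :=
  (∀ i j : ℤ, -1 ≤ i → -1 ≤ j → ⁅L i, L j⁆ = ((i - j : ℤ) : ℂ) • L (i + j)) ∧
  LinearIndependent ℂ (fun k : {k : ℤ // -1 ≤ k} => L k.1) ∧
  Submodule.span ℂ (Set.range fun k : {k : ℤ // -1 ≤ k} => L k.1) = ⊤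

attribute [local instance 100] LieRing.ofAssociativeRing

theorem Module.End.finite_of_hasEigenvector {K V ι : Type*} [Field K] [AddCommGroup V]
    [Module K V] [FiniteDimensional K V] (f : Module.End K V) {s : Set ι} (μ : ι → K)
    (hμ : s.InjOn μ) (v : ι → V) (hv : ∀ i ∈ s, f.HasEigenvector (μ i) (v i)) : s.Finite :=
  Set.finite_coe_iff.mp <|
    (f.eigenvectors_linearIndependent' (fun i : s => μ i) hμ.injective (fun i : s => v i)
      fun i => hv i i.2).finite

def IsWittFamily (K : Type*) {g : Type*} [CommRing K] [LieRing g] [LieAlgebra K g]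
    (A : ℤ → g) : Prop :=
  ∀ i j : ℤ, -1 ≤ i → -1 ≤ j → ⁅A i, A j⁆ = ((i - j : ℤ) : K) • A (i + j)

namespace IsWittFamily

variable {K g g' : Type*} [Field K] [LieRing g] [LieAlgebra K g] [LieRing g'] [LieAlgebra K g']
  {A : ℤ → g}

theorem map (hA : IsWittFamily K A) (f : g →ₗ⁅K⁆ g') : IsWittFamily K (fun k => f (A k)) :=
  fun i j hi hj => by rw [← LieHom.map_lie, hA i j hi hj, map_smul]

theorem hasEigenvector_ad (hA : IsWittFamily K A) {k : ℤ} (hk : -1 ≤ k) (hne : A k ≠ 0) :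
    (LieAlgebra.ad K g (A 0)).HasEigenvector ((-k : ℤ) : K) (A k) := by
  refine ⟨?_, hne⟩
  rw [Module.End.mem_eigenspace_iff, LieAlgebra.ad_apply, hA 0 k (by norm_num) hk]
  simp

theorem finite_setOf_ne_zero [CharZero K] [FiniteDimensional K g] (hA : IsWittFamily K A) :
    {k : ℤ | -1 ≤ k ∧ A k ≠ 0}.Finite :=
  (LieAlgebra.ad K g (A 0)).finite_of_hasEigenvector (fun k : ℤ => ((-k : ℤ) : K))
    (fun a _ b _ h => by simpa using h) A fun _ hk => hA.hasEigenvector_ad hk.1 hk.2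

theorem eq_zero_of_succ_eq_zero [CharZero K] (hA : IsWittFamily K A) {k : ℤ} (hk : -1 ≤ k)
    (hsucc : A (k + 1) = 0) : A k = 0 := by
  have h := hA (-1) (k + 1) le_rfl (by omega)
  rw [hsucc, lie_zero, show -1 + (k + 1) = k by ring, eq_comm, smul_eq_zero] at h
  exact h.resolve_left (by exact_mod_cast (by omega : (-1 - (k + 1) : ℤ) ≠ 0))

theorem eq_zero [CharZero K] [FiniteDimensional K g] (hA : IsWittFamily K A) {k : ℤ}
    (hk : -1 ≤ k) : A k = 0 := by
  by_contra hne
  obtain ⟨m, ⟨hm, hAm⟩, hmax⟩ :=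
    Set.exists_max_image _ id hA.finite_setOf_ne_zero ⟨k, hk, hne⟩
  refine hAm (hA.eq_zero_of_succ_eq_zero hm ?_)
  by_contra hsucc
  exact (hmax (m + 1) ⟨by omega, hsucc⟩).not_gt (lt_add_one m)

end IsWittFamily

/-- Every finite-dimensional complex representation of the Lie algebra `W_>` is trivial:
if `ρ : W_> → End(E)` is a Lie algebra homomorphism with `E` a finite-dimensional complex
vector space, then `ρ(L_k) = 0` for all `k ≥ -1`. -/
theorem finiteDimensional_rep_trivial {W E : Type*} [LieRing W] [LieAlgebra ℂ W]
    [AddCommGroup E] [Module ℂ E] [FiniteDimensional ℂ E]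
    (L : ℤ → W) (hW : IsWittBasis L)
    (ρ : W →ₗ⁅ℂ⁆ Module.End ℂ E) :
    ∀ k : ℤ, -1 ≤ k → ρ (L k) = 0 :=
  fun _ hk => (IsWittFamily.map hW.1 ρ).eq_zero hk
end

section
/- The Lie algebra W_> is simple: its only ideals are 0 and W_> itself. -/
/-!
Let `I ≠ 0` be an ideal. Since `ad L₀` acts diagonally on the basis, `L_k ↦ -k L_k`, with
pairwise distinct eigenvalues, applying to a nonzero `x ∈ I` a Lagrange interpolation polynomial in
`ad L₀` isolates a single nonzero component of `x`, so some `L_k` lies in `I`. Bracketing with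
`L_{-1}` lowers the index (`[L_{-1}, L_{k+1}] = -(k+2) L_k`) down to `L_{-1} ∈ I`, and bracketing
`L_{-1}` with `L_{m+1}` gives `(m+2) L_m ∈ I` for every `m ≥ -1`, hence `I = W_>`.
-/

open Polynomial

theorem Module.End.aeval_apply_mem_of_mem_invtSubmodule {K V : Type*} [CommRing K]
    [AddCommGroup V] [Module K V] {f : Module.End K V} {p : Submodule K V}
    (hp : p ∈ f.invtSubmodule) (q : K[X]) {x : V} (hx : x ∈ p) : aeval f q x ∈ p := by
  induction q using Polynomial.induction_on with
  | C a => simpa [Module.algebraMap_end_apply] using p.smul_mem a hx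
  | add q r hq hr => simpa using p.add_mem hq hr
  | monomial n a ih =>
    rw [pow_succ', ← mul_assoc, mul_comm _ X, mul_assoc, map_mul, Module.End.mul_apply, aeval_X]
    exact hp ih

theorem Submodule.smul_mem_of_sum_smul_eigenvector_mem {K V ι : Type*} [Field K]
    [AddCommGroup V] [Module K V] {f : Module.End K V} {p : Submodule K V}
    (hp : p ∈ f.invtSubmodule) {v : ι → V} {μ : ι → K} (hv : ∀ i, f (v i) = μ i • v i)
    {s : Finset ι} (hμ : Set.InjOn μ s) {c : ι → K} (hc : ∑ j ∈ s, c j • v j ∈ p)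
    {i : ι} (hi : i ∈ s) : c i • v i ∈ p := by
  classical
  have hisolate : aeval f (Lagrange.basis s μ i) (∑ j ∈ s, c j • v j) = c i • v i := by
    rw [map_sum, Finset.sum_eq_single_of_mem i hi]
    · rw [map_smul, Module.End.aeval_apply_of_mem_apply_eq_smul (hv i),
        Lagrange.eval_basis_self hμ hi, one_smul]
    · intro j hj hji
      rw [map_smul, Module.End.aeval_apply_of_mem_apply_eq_smul (hv j),
        Lagrange.eval_basis_of_ne hji.symm hj, zero_smul, smul_zero]
  exact hisolate ▸ Module.End.aeval_apply_mem_of_mem_invtSubmodule hp _ hc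

section WittBasis

def HasWittBrackets (K : Type*) {W : Type*} [CommRing K] [LieRing W] [LieAlgebra K W]
    (L : ℤ → W) : Prop :=
  ∀ i j : ℤ, -1 ≤ i → -1 ≤ j → ⁅L i, L j⁆ = ((i - j : ℤ) : K) • L (i + j)

variable {K W : Type*} [Field K] [CharZero K] [LieRing W] [LieAlgebra K W] {L : ℤ → W}
  (I : LieIdeal K W)

theorem wittBasis_add_mem_of_lie_mem (hL : HasWittBrackets K L) {i j : ℤ} (hi : -1 ≤ i)
    (hj : -1 ≤ j) (hij : i ≠ j) (h : ⁅L i, L j⁆ ∈ I) : L (i + j) ∈ I := by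
  have hc : ((i - j : ℤ) : K) ≠ 0 := Int.cast_ne_zero.mpr (sub_ne_zero.mpr hij)
  rw [hL i j hi hj] at h
  exact ((I : Submodule K W).smul_mem_iff hc).mp h

theorem wittBasis_neg_one_mem (hL : HasWittBrackets K L) {k : ℤ} (hk : -1 ≤ k) (hLk : L k ∈ I) :
    L (-1) ∈ I := by
  induction k, hk using Int.leInduction with
  | base => exact hLk
  | succ n hn ih =>
    refine ih ?_
    have h := wittBasis_add_mem_of_lie_mem I hL le_rfl (by omega) (by omega) (I.lie_mem hLk)
    rwa [show -1 + (n + 1) = n by ring] at h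

theorem wittBasis_mem_of_neg_one_mem (hL : HasWittBrackets K L) (hLneg : L (-1) ∈ I) {m : ℤ}
    (hm : -1 ≤ m) : L m ∈ I := by
  have h := wittBasis_add_mem_of_lie_mem I hL (i := m + 1) (by omega) le_rfl (by omega)
    (I.lie_mem hLneg)
  rwa [add_neg_cancel_right] at h

theorem exists_wittBasis_mem_of_ne_bot (hL : HasWittBrackets K L)
    (hspan : Submodule.span K (Set.range fun k : {k : ℤ // -1 ≤ k} => L k.1) = ⊤)
    (hI : I ≠ ⊥) : ∃ k, -1 ≤ k ∧ L k ∈ I := by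
  obtain ⟨x, hxI, hx0⟩ := (Submodule.ne_bot_iff (I : Submodule K W)).mp
    ((LieSubmodule.toSubmodule_eq_bot I).not.mpr hI)
  obtain ⟨c, rfl⟩ :=
    Finsupp.mem_span_range_iff_exists_finsupp.mp (hspan ▸ Submodule.mem_top (x := x))
  obtain ⟨⟨k, hk⟩, hck⟩ : c.support.Nonempty :=
    Finsupp.support_nonempty_iff.mpr (by rintro rfl; simp at hx0)
  have hinv : (I : Submodule K W) ∈ (LieAlgebra.ad K W (L 0)).invtSubmodule :=
    fun y hy => I.lie_mem hy
  have heigen (k : {k : ℤ // -1 ≤ k}) :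
      LieAlgebra.ad K W (L 0) (L k.1) = ((0 - k.1 : ℤ) : K) • L k.1 := by
    rw [LieAlgebra.ad_apply, hL 0 k.1 (by norm_num) k.2, zero_add]
  have hμ : Set.InjOn (fun k : {k : ℤ // -1 ≤ k} => ((0 - k.1 : ℤ) : K)) c.support :=
    fun a _ b _ hab => Subtype.ext (by simpa using hab)
  exact ⟨k, hk, ((I : Submodule K W).smul_mem_iff (Finsupp.mem_support_iff.mp hck)).mp
    (Submodule.smul_mem_of_sum_smul_eigenvector_mem hinv heigen hμ hxI hck)⟩

end WittBasis

/-- The Lie algebra `W_>` is simple: its only ideals are `0` and `W_>` itself. -/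
theorem wittPos_simple {W : Type*} [LieRing W] [LieAlgebra ℂ W]
    (L : ℤ → W) (hW : IsWittBasis L) :
    ∀ I : LieIdeal ℂ W, I = ⊥ ∨ I = ⊤ := by
  obtain ⟨hL, -, hspan⟩ := hW
  intro I
  refine or_iff_not_imp_left.mpr fun hI => ?_
  obtain ⟨k, hk, hLk⟩ := exists_wittBasis_mem_of_ne_bot I hL hspan hI
  have hLneg := wittBasis_neg_one_mem I hL hk hLk
  rw [← LieSubmodule.toSubmodule_eq_top, eq_top_iff, ← hspan, Submodule.span_le]
  rintro _ ⟨⟨m, hm⟩, rfl⟩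
  exact wittBasis_mem_of_neg_one_mem I hL hLneg hm
end

section
/- Let ρ : W_> → g be a linear map into a Lie algebra g such that: (a) [ρ(L_{-1}), ρ(L_j)] = -(1+j)ρ(L_{j-1}) for all j ≥ -1; (b) [ρ(L_0), ρ(L_j)] = -j·ρ(L_j) for all j ≥ -1; (c) [ρ(L_1), ρ(L_j)] = (1-j)ρ(L_{j+1}) for all j ≥ 1; and (d) for each n ≥ 3, the map ad(ρ(L_{-1})) is injective on the span of elements X satisfying [ρ(L_0), X] = -n·X, and each bracket [ρ(L_i),ρ(L_j)] - (i-j)ρ(L_{i+j}) with i,j ≥ 1 lies in that span for n = i+j. Then ρ is a Lie algebra homomorphism: [ρ(L_i),ρ(L_j)] = (i-j)ρ(L_{i+j}) for all i,j ≥ -1. -/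
/-!
The relations with `ρ(L_{-1})`, `ρ(L_0)` and `ρ(L_1)` are given, so only `i, j ≥ 2` remain, and
these are handled by induction on `i + j`. By the Jacobi identity and the relations for
`(i - 1, j)` and `(i, j - 1)`, `ad ρ(L_{-1})` kills the defect `[ρ(L_i), ρ(L_j)] - (i - j) ρ(L_{i+j})`;
as the defect lies in the `-(i + j)`-weight space of `ad ρ(L_0)`, where `ad ρ(L_{-1})` is injective,
it vanishes.
-/

section

variable {R g : Type*} [CommRing R] [LieRing g] [LieAlgebra R g]

variable (R) in
def wittDefect (ρ : ℤ → g) (i j : ℤ) : g := ⁅ρ i, ρ j⁆ - ((i - j : ℤ) : R) • ρ (i + j)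

variable (R) in
def WittBracket (ρ : ℤ → g) (i j : ℤ) : Prop := ⁅ρ i, ρ j⁆ = ((i - j : ℤ) : R) • ρ (i + j)

variable {ρ : ℤ → g} {i j : ℤ}

namespace WittBracket

theorem of_lie_eq {c m : ℤ} (h : ⁅ρ i, ρ j⁆ = (c : R) • ρ m) (hc : c = i - j) (hm : m = i + j) :
    WittBracket R ρ i j := by
  rwa [WittBracket, ← hc, ← hm]

theorem symm (h : WittBracket R ρ i j) : WittBracket R ρ j i :=
  of_lie_eq (c := -(i - j)) (by rw [← lie_skew, h, Int.cast_neg, neg_smul]) (by ring) (by ring)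

end WittBracket

theorem wittBracket_iff_wittDefect_eq_zero :
    WittBracket R ρ i j ↔ wittDefect R ρ i j = 0 :=
  sub_eq_zero.symm

theorem lie_neg_one_wittDefect_eq_zero (hi : WittBracket R ρ (-1) i) (hj : WittBracket R ρ (-1) j)
    (hij : WittBracket R ρ (-1) (i + j))
    (hi' : WittBracket R ρ (i - 1) j) (hj' : WittBracket R ρ i (j - 1)) :
    ⁅ρ (-1), wittDefect R ρ i j⁆ = 0 := by
  unfold WittBracket at *
  rw [show -1 + i = i - 1 by ring] at hi
  rw [show -1 + j = j - 1 by ring] at hj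
  rw [show -1 + (i + j) = i + j - 1 by ring] at hij
  rw [show i - 1 + j = i + j - 1 by ring] at hi'
  rw [show i + (j - 1) = i + j - 1 by ring] at hj'
  rw [wittDefect, lie_sub, lie_smul, leibniz_lie, hi, hj, hij, smul_lie, lie_smul, hi', hj',
    smul_smul, smul_smul, smul_smul, ← add_smul, ← sub_smul]
  -- the coefficient identity `(1 + i)(i - j - 1) + (1 + j)(i - j + 1) = (i - j)(1 + i + j)`
  convert zero_smul R (ρ (i + j - 1)) using 2
  push_cast
  ring

theorem wittBracket_of_one_le
    (hL : ∀ k, -1 ≤ k → WittBracket R ρ (-1) k) (hR : ∀ k, 1 ≤ k → WittBracket R ρ 1 k)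
    (hinj : ∀ i j, 2 ≤ i → 2 ≤ j → ⁅ρ (-1), wittDefect R ρ i j⁆ = 0 → wittDefect R ρ i j = 0) :
    ∀ i j, 1 ≤ i → 1 ≤ j → WittBracket R ρ i j := by
  suffices ∀ n : ℕ, ∀ i j : ℤ, 1 ≤ i → 1 ≤ j → i + j ≤ n → WittBracket R ρ i j from
    fun i j hi hj => this (i + j).toNat i j hi hj (by omega)
  intro n
  induction n with
  | zero => intro i j hi hj hn; omega
  | succ n ih =>
    intro i j hi hj hn
    obtain rfl | hi2 := hi.eq_or_lt
    · exact hR j hj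
    obtain rfl | hj2 := hj.eq_or_lt
    · exact (hR i hi).symm
    refine wittBracket_iff_wittDefect_eq_zero.mpr (hinj i j hi2 hj2 ?_)
    exact lie_neg_one_wittDefect_eq_zero (hL i (by omega)) (hL j (by omega)) (hL _ (by omega))
      (ih _ _ (by omega) hj (by omega)) (ih _ _ hi (by omega) (by omega))

theorem wittBracket_of_neg_one_le
    (hL : ∀ k, -1 ≤ k → WittBracket R ρ (-1) k) (h0 : ∀ k, -1 ≤ k → WittBracket R ρ 0 k)
    (hpos : ∀ i j, 1 ≤ i → 1 ≤ j → WittBracket R ρ i j) :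
    ∀ i j, -1 ≤ i → -1 ≤ j → WittBracket R ρ i j := by
  intro i j hi hj
  obtain rfl | hi := hi.eq_or_lt
  · exact hL j hj
  obtain rfl | hj := hj.eq_or_lt
  · exact (hL i hi.le).symm
  obtain rfl | hi := (Int.add_one_le_iff.mpr hi).eq_or_lt
  · exact h0 j hj.le
  obtain rfl | hj := (Int.add_one_le_iff.mpr hj).eq_or_lt
  · exact (h0 i (by omega)).symm
  exact hpos i j hi hj

end

/-- The inductive argument extending an `sl(2)`-map to `W_>` (Step 4 of Theorem 2.8):
if a family `ρ k` (playing the role of `ρ(L_k)`) satisfies the bracket relations with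
`ρ(L_{-1})`, `ρ(L_0)`, `ρ(L_1)`, and `ad(ρ(L_{-1}))` is injective on the relevant
eigenspaces of `ad(ρ(L_0))` which contain the defects, then `ρ` is a Lie algebra
homomorphism: `[ρ(L_i), ρ(L_j)] = (i-j) ρ(L_{i+j})` for all `i, j ≥ -1`. -/
theorem extend_to_wittPos_hom {g : Type*} [LieRing g] [LieAlgebra ℂ g]
    (ρ : ℤ → g)
    (ha : ∀ j : ℤ, -1 ≤ j → ⁅ρ (-1), ρ j⁆ = ((-(1 + j) : ℤ) : ℂ) • ρ (j - 1))
    (hb : ∀ j : ℤ, -1 ≤ j → ⁅ρ 0, ρ j⁆ = ((-j : ℤ) : ℂ) • ρ j)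
    (hc : ∀ j : ℤ, 1 ≤ j → ⁅ρ 1, ρ j⁆ = ((1 - j : ℤ) : ℂ) • ρ (j + 1))
    (hd1 : ∀ n : ℤ, 3 ≤ n →
      ∀ X ∈ Submodule.span ℂ {X : g | ⁅ρ 0, X⁆ = ((-n : ℤ) : ℂ) • X},
        ⁅ρ (-1), X⁆ = 0 → X = 0)
    (hd2 : ∀ i j : ℤ, 1 ≤ i → 1 ≤ j →
      ⁅ρ i, ρ j⁆ - ((i - j : ℤ) : ℂ) • ρ (i + j) ∈
        Submodule.span ℂ {X : g | ⁅ρ 0, X⁆ = ((-(i + j) : ℤ) : ℂ) • X}) :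
    ∀ i j : ℤ, -1 ≤ i → -1 ≤ j →
      ⁅ρ i, ρ j⁆ = ((i - j : ℤ) : ℂ) • ρ (i + j) := by
  have hL (k : ℤ) (hk : -1 ≤ k) : WittBracket ℂ ρ (-1) k :=
    .of_lie_eq (ha k hk) (by ring) (by ring)
  have h0 (k : ℤ) (hk : -1 ≤ k) : WittBracket ℂ ρ 0 k := .of_lie_eq (hb k hk) (by ring) (by ring)
  have h1 (k : ℤ) (hk : 1 ≤ k) : WittBracket ℂ ρ 1 k := .of_lie_eq (hc k hk) rfl (by ring)
  have hinj (i j : ℤ) (hi : 2 ≤ i) (hj : 2 ≤ j) :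
      ⁅ρ (-1), wittDefect ℂ ρ i j⁆ = 0 → wittDefect ℂ ρ i j = 0 :=
    hd1 (i + j) (by omega) _ (hd2 i j (by omega) (by omega))
  exact wittBracket_of_neg_one_le hL h0 (wittBracket_of_one_le hL h1 hinj)
end

section
/- For each integer i ≥ -1, define the first-order differential operator σ(L_i) := (1/2)z^{-2i}(z∂_z + (1-2i)/2) + s·z^{-2i-3} acting on ℂ((z)) (formal Laurent series), where s ∈ ℂ is fixed. Then σ extends linearly to a Lie algebra homomorphism from W_> to the Lie algebra of first-order differential operators on ℂ((z)): [σ(L_i), σ(L_j)] = (i-j)σ(L_{i+j}) for all i,j ≥ -1. -/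
/-- The operator `z ∂_z` on formal Laurent series `ℂ((z))`, acting on coefficients by
`(z∂_z f).coeff n = n · f.coeff n`. -/
noncomputable def zDz : LaurentSeries ℂ →ₗ[ℂ] LaurentSeries ℂ where
  toFun f :=
    { coeff := fun n => (n : ℂ) * f.coeff n
      isPWO_support' := f.isPWO_support'.mono (by
        intro n hn
        simp only [Function.mem_support] at hn ⊢
        intro h
        exact hn (by rw [h, mul_zero])) }
  map_add' f g := by
    ext n
    simp [mul_add]
  map_smul' c f := by
    ext n
    simp
    ring

/-- Multiplication by `z^k` on `ℂ((z))`, acting on coefficients by the shift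
`(z^k · f).coeff n = f.coeff (n - k)`. -/
noncomputable def zPow (k : ℤ) : LaurentSeries ℂ →ₗ[ℂ] LaurentSeries ℂ where
  toFun f :=
    { coeff := fun n => f.coeff (n - k)
      isPWO_support' := by
        refine (f.isPWO_support'.image_of_monotone
          (f := fun m => m + k) (fun a b hab => by dsimp; omega)).mono ?_
        intro n hn
        exact ⟨n - k, hn, by ring⟩ }
  map_add' f g := by ext n; simp
  map_smul' c f := by ext n; simp

/-- The first-order differential operator
`σ(L_i) = (1/2) z^{-2i} (z∂_z + (1-2i)/2) + s z^{-2i-3}` on `ℂ((z))`. -/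
noncomputable def sigmaL (s : ℂ) (i : ℤ) : LaurentSeries ℂ →ₗ[ℂ] LaurentSeries ℂ :=
  ((1 : ℂ)/2) • (zPow (-2 * i) ∘ₗ (zDz + (((1 - 2 * i : ℤ) : ℂ)/2) • LinearMap.id))
    + s • zPow (-2 * i - 3)

/-! On coefficients, `σ(L_i)` is a weighted shift by `2i`:
`(σ(L_i) f)ₙ = α_i(n) f_{n+2i} + s f_{n+2i+3}` with `α_i(n) = (n+2i)/2 + (1-2i)/4`.
The commutator of two such operators is again of this form, and the bracket relation reduces
to the two polynomial identities `α_i(n) α_j(n+2i) - α_j(n) α_i(n+2j) = (i-j) α_{i+j}(n)` and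
`α_i(n) + α_j(n+2i+3) - α_j(n) - α_i(n+2j+3) = i - j`; the `s²` terms cancel. -/

@[simp]
lemma coeff_zDz (f : LaurentSeries ℂ) (n : ℤ) : (zDz f).coeff n = n * f.coeff n := rfl

@[simp]
lemma coeff_zPow (k : ℤ) (f : LaurentSeries ℂ) (n : ℤ) : (zPow k f).coeff n = f.coeff (n - k) := rfl

lemma coeff_sigmaL (s : ℂ) (i : ℤ) (f : LaurentSeries ℂ) (n : ℤ) :
    (sigmaL s i f).coeff n
      = ((n + 2 * i : ℂ) / 2 + (1 - 2 * i) / 4) * f.coeff (n + 2 * i)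
        + s * f.coeff (n + 2 * i + 3) := by
  simp only [sigmaL, LinearMap.add_apply, LinearMap.smul_apply, LinearMap.comp_apply,
    LinearMap.id_apply, HahnSeries.coeff_add, HahnSeries.coeff_smul, coeff_zPow, coeff_zDz,
    smul_eq_mul]
  rw [show n - -2 * i = n + 2 * i by ring, show n - (-2 * i - 3) = n + 2 * i + 3 by ring]
  push_cast
  ring

/-- `σ` extends to a Lie algebra homomorphism `W_> → Diff¹(ℂ((z)))`:
`[σ(L_i), σ(L_j)] = (i - j) σ(L_{i+j})` for all `i, j ≥ -1`. -/
theorem sigmaL_is_hom (s : ℂ) :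
    ∀ i j : ℤ, -1 ≤ i → -1 ≤ j →
      sigmaL s i ∘ₗ sigmaL s j - sigmaL s j ∘ₗ sigmaL s i
        = ((i - j : ℤ) : ℂ) • sigmaL s (i + j) := by
  intro i j _ _
  ext f n
  simp only [LinearMap.sub_apply, LinearMap.comp_apply, LinearMap.smul_apply,
    HahnSeries.coeff_sub, HahnSeries.coeff_smul, smul_eq_mul, coeff_sigmaL]
  rw [show n + 2 * j + 2 * i = n + 2 * (i + j) by ring,
    show n + 2 * i + 2 * j = n + 2 * (i + j) by ring,
    show n + 2 * j + 3 + 2 * i = n + 2 * (i + j) + 3 by ring,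
    show n + 2 * i + 3 + 2 * j = n + 2 * (i + j) + 3 by ring]
  push_cast
  ring
end
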